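/- The map sending a matrix in G_n to its parameter tuple (x_1,...,x_n) ∈ ℂ^n is a surjective group homomorphism from G_n to (ℂ^n, +), whose kernel is the center of G_n; in particular there is a short exact sequence 0 → ℂ^n → G_n → ℂ^n → 0. -/
import Mathlib

open Matrix

/-- The matrix of the group `G_n` with parameters `x 1, …, x n, y 1, …, y n`
(1-indexed; values of `x`, `y` outside `{1, …, n}` are irrelevant). -/
noncomputable def Gmat (n : ℕ) (x y : ℕ → ℂ) : Matrix (Fin (n+3)) (Fin (n+3)) ℂ :=
  Matrix.of fun i j : Fin (n+3) =>
    if (i : ℕ) = (j : ℕ) then 1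
    else if (j : ℕ) = n ∧ (i : ℕ) + 2 ≤ n then -(starRingEnd ℂ) (x (n - 1 - (i : ℕ)))
    else if (j : ℕ) = n + 1 ∧ (i : ℕ) + 1 = n then -(starRingEnd ℂ) (x 1)
    else if (j : ℕ) = n + 1 ∧ (i : ℕ) + 2 ≤ n then x (n - (i : ℕ))
    else if (j : ℕ) = n + 2 ∧ (i : ℕ) + 1 ≤ n then y (n - (i : ℕ))
    else if (j : ℕ) = n + 2 ∧ ((i : ℕ) = n ∨ (i : ℕ) = n + 1) then x 1
    else 0

/-- The set of matrices of the group `G_n`. -/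
def GnSet (n : ℕ) : Set (Matrix (Fin (n+3)) (Fin (n+3)) ℂ) :=
  {A | ∃ x y : ℕ → ℂ, A = Gmat n x y}

/-- The strictly "upper" part of `Gmat`. -/
noncomputable def Nmat (n : ℕ) (x y : ℕ → ℂ) : Matrix (Fin (n+3)) (Fin (n+3)) ℂ :=
  Matrix.of fun i j : Fin (n+3) =>
    if (i : ℕ) = (j : ℕ) then 0 else Gmat n x y i j

/-- The `y`-parameter of a product of two elements of `G_n`. -/
noncomputable def ycomb (x y x' y' : ℕ → ℂ) : ℕ → ℂ := fun j =>
  y j + y' j + (if j = 1 then -(starRingEnd ℂ) (x 1)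
     else x j - (starRingEnd ℂ) (x (j-1))) * x' 1

lemma Gmat_eq (n : ℕ) (x y : ℕ → ℂ) : Gmat n x y = 1 + Nmat n x y := by
  ext i j
  simp only [Gmat, Nmat, Matrix.add_apply, Matrix.of_apply, Matrix.one_apply, Fin.ext_iff]
  split_ifs <;> ring

lemma Ncol_n (n : ℕ) (x y : ℕ → ℂ) (i : Fin (n+3)) :
    Nmat n x y i ⟨n, by omega⟩ =
      if (i : ℕ) + 2 ≤ n then -(starRingEnd ℂ) (x (n - (i:ℕ) - 1)) else 0 := by
  simp only [Nmat, Gmat, Matrix.of_apply, Fin.val_mk, true_and, and_true, true_or, or_true]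
  rw [show n - 1 - (i:ℕ) = n - (i:ℕ) - 1 from by omega]
  split_ifs <;> first | rfl | (exfalso; omega)

lemma Ncol_n1 (n : ℕ) (x y : ℕ → ℂ) (i : Fin (n+3)) :
    Nmat n x y i ⟨n+1, by omega⟩ = if (i : ℕ) + 1 = n then -(starRingEnd ℂ) (x 1)
      else if (i : ℕ) + 2 ≤ n then x (n - (i:ℕ)) else 0 := by
  simp only [Nmat, Gmat, Matrix.of_apply, Fin.val_mk, true_and, and_true, true_or, or_true]
  split_ifs <;> first | rfl | (exfalso; omega)

lemma Nrow_n (n : ℕ) (x y : ℕ → ℂ) (j : Fin (n+3)) :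
    Nmat n x y ⟨n, by omega⟩ j = if (j : ℕ) = n + 2 then x 1 else 0 := by
  simp only [Nmat, Gmat, Matrix.of_apply, Fin.val_mk, true_and, and_true, true_or, or_true]
  split_ifs <;> first | rfl | (exfalso; omega)

lemma Nrow_n1 (n : ℕ) (x y : ℕ → ℂ) (j : Fin (n+3)) :
    Nmat n x y ⟨n+1, by omega⟩ j = if (j : ℕ) = n + 2 then x 1 else 0 := by
  simp only [Nmat, Gmat, Matrix.of_apply, Fin.val_mk, true_and, and_true, true_or, or_true]
  split_ifs <;> first | rfl | (exfalso; omega)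

lemma Nmul (n : ℕ) (x y x' y' : ℕ → ℂ) :
    Nmat n x y * Nmat n x' y' = Matrix.of fun i j : Fin (n+3) =>
      (Nmat n x y i ⟨n, by omega⟩ + Nmat n x y i ⟨n+1, by omega⟩) *
        (if (j : ℕ) = n + 2 then x' 1 else 0) := by
  ext i j
  rw [Matrix.mul_apply, Matrix.of_apply]
  have hab : (⟨n, by omega⟩ : Fin (n+3)) ≠ ⟨n+1, by omega⟩ := by
    simp [Fin.ext_iff]
  have h0 : ∀ k ∈ Finset.univ, k ∉ ({⟨n, by omega⟩, ⟨n+1, by omega⟩} : Finset (Fin (n+3))) →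
      Nmat n x y i k * Nmat n x' y' k j = 0 := by
    intro k _ hk
    simp only [Finset.mem_insert, Finset.mem_singleton, Fin.ext_iff, Fin.val_mk] at hk
    push_neg at hk
    have hk1 : (k : ℕ) ≠ n := hk.1
    have hk2 : (k : ℕ) ≠ n + 1 := hk.2
    rcases Nat.lt_or_ge (k : ℕ) (n+2) with h | h
    · have : Nmat n x y i k = 0 := by
        simp only [Nmat, Gmat, Matrix.of_apply]
        split_ifs <;> first | rfl | (exfalso; omega)
      rw [this, zero_mul]
    · have : Nmat n x' y' k j = 0 := by
        have hk3 : (k : ℕ) = n + 2 := by have := k.isLt; omega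
        simp only [Nmat, Gmat, Matrix.of_apply]
        split_ifs <;> first | rfl | (exfalso; omega)
      rw [this, mul_zero]
  rw [← Finset.sum_subset (Finset.subset_univ {⟨n, by omega⟩, ⟨n+1, by omega⟩}) h0,
    Finset.sum_pair hab, Nrow_n, Nrow_n1]
  split_ifs <;> ring

set_option maxHeartbeats 1000000 in
lemma Gmul (n : ℕ) (x y x' y' : ℕ → ℂ) :
    Gmat n x y * Gmat n x' y' = Gmat n (x + x') (ycomb x y x' y') := by
  rw [Gmat_eq n x y, Gmat_eq n x' y']
  simp only [add_mul, mul_add, one_mul, mul_one]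
  rw [Nmul]
  ext i j
  have hi := i.isLt
  have hj := j.isLt
  simp only [Matrix.add_apply, Matrix.of_apply]
  rw [Ncol_n, Ncol_n1]
  simp only [Matrix.one_apply, Nmat, Gmat, ycomb, Matrix.of_apply, Fin.ext_iff,
    Fin.val_mk, true_and, and_true, true_or, or_true, Pi.add_apply, map_add]
  split_ifs <;> first | (exfalso; omega) | ring

lemma Gmat_zero (n : ℕ) : Gmat n 0 0 = 1 := by
  ext i j
  simp only [Gmat, Matrix.of_apply, Matrix.one_apply, Fin.ext_iff, Pi.zero_apply,
    map_zero, neg_zero]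
  split_ifs <;> rfl

/-- the `y`-parameter of the inverse. -/
noncomputable def yinvf (x y : ℕ → ℂ) : ℕ → ℂ := fun j =>
  -y j + (if j = 1 then -(starRingEnd ℂ) (x 1)
     else x j - (starRingEnd ℂ) (x (j-1))) * x 1

lemma GG_inv (n : ℕ) (x y : ℕ → ℂ) :
    Gmat n x y * Gmat n (-x) (yinvf x y) = 1 := by
  rw [Gmul]
  have h1 : x + (-x) = (0 : ℕ → ℂ) := by funext m; simp
  have h2 : ycomb x y (-x) (yinvf x y) = (0 : ℕ → ℂ) := by
    funext m
    simp only [ycomb, yinvf, Pi.neg_apply, Pi.zero_apply]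
    ring
  rw [h1, h2, Gmat_zero]

/-- `Gmat` as an element of `GL`. -/
noncomputable def Gunit (n : ℕ) (x y : ℕ → ℂ) : GL (Fin (n+3)) ℂ :=
  ⟨Gmat n x y, Gmat n (-x) (yinvf x y), GG_inv n x y,
    (mul_eq_one_comm).mp (GG_inv n x y)⟩

@[simp] lemma Gunit_val (n : ℕ) (x y : ℕ → ℂ) : (Gunit n x y : Matrix _ _ ℂ) = Gmat n x y := rfl

/-- extraction of the `x`-parameters. -/
noncomputable def pmap (n : ℕ) (A : Matrix (Fin (n+3)) (Fin (n+3)) ℂ) : Fin n → ℂ :=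
  fun k => if (k:ℕ) = 0 then A ⟨n, by omega⟩ ⟨n+2, by omega⟩
    else A ⟨n - ((k:ℕ)+1), by omega⟩ ⟨n+1, by omega⟩

/-- extraction of the `y`-parameters. -/
noncomputable def qmap (n : ℕ) (A : Matrix (Fin (n+3)) (Fin (n+3)) ℂ) : Fin n → ℂ :=
  fun k => A ⟨n - ((k:ℕ)+1), by omega⟩ ⟨n+2, by omega⟩

lemma p_Gmat (n : ℕ) (x y : ℕ → ℂ) (k : Fin n) :
    pmap n (Gmat n x y) k = x ((k:ℕ)+1) := by
  have hk := k.isLt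
  rcases Nat.eq_zero_or_pos (k:ℕ) with h0 | h0
  · rw [pmap, if_pos h0]
    simp only [Gmat, Matrix.of_apply, Fin.val_mk, true_and, and_true, true_or, or_true,
      if_true]
    split_ifs <;> first | (exfalso; omega) | (congr 1; omega)
  · rw [pmap, if_neg (by omega)]
    simp only [Gmat, Matrix.of_apply, Fin.val_mk, true_and, and_true, true_or, or_true,
      if_true]
    split_ifs <;> first | (exfalso; omega) | (congr 1; omega)

lemma q_Gmat (n : ℕ) (x y : ℕ → ℂ) (k : Fin n) :
    qmap n (Gmat n x y) k = y ((k:ℕ)+1) := by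
  have hk := k.isLt
  rw [qmap]
  simp only [Gmat, Matrix.of_apply, Fin.val_mk, true_and, and_true, true_or, or_true,
    if_true]
  split_ifs <;> first | (exfalso; omega) | (congr 1; omega)

lemma Gmat_inj_y (n : ℕ) (x y x' y' : ℕ → ℂ) (h : Gmat n x y = Gmat n x' y') :
    ∀ j, 1 ≤ j → j ≤ n → y j = y' j := by
  intro j h1 h2
  have := congrFun (congrArg (qmap n) h) ⟨j-1, by omega⟩
  rw [q_Gmat, q_Gmat] at this
  simpa [show j - 1 + 1 = j from by omega] using this

lemma Gmat_congr (n : ℕ) (hn : 1 ≤ n) (x y x' y' : ℕ → ℂ)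
    (hx : ∀ j, 1 ≤ j → j ≤ n → x j = x' j) (hy : ∀ j, 1 ≤ j → j ≤ n → y j = y' j) :
    Gmat n x y = Gmat n x' y' := by
  ext i j
  simp only [Gmat, Matrix.of_apply]
  split_ifs with h1 h2 h3 h4 h5 h6
  · rfl
  · rw [hx _ (by omega) (by omega)]
  · rw [hx 1 (by omega) (by omega)]
  · rw [hx _ (by omega) (by omega)]
  · rw [hy _ (by omega) (by omega)]
  · rw [hx 1 (by omega) (by omega)]
  · rfl

lemma xvanish (n : ℕ) (hn : 2 ≤ n) (x y : ℕ → ℂ)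
    (hc : ∀ c : ℂ, Gmat n x y * Gmat n (fun _ => c) 0 = Gmat n (fun _ => c) 0 * Gmat n x y) :
    ∀ j, 1 ≤ j → j ≤ n → x j = 0 := by
  have key : ∀ (c : ℂ) (j : ℕ), 1 ≤ j → j ≤ n →
      (if j = 1 then -(starRingEnd ℂ) (x 1) else x j - (starRingEnd ℂ) (x (j-1))) * c
      = (if j = 1 then -(starRingEnd ℂ) c else c - (starRingEnd ℂ) c) * x 1 := by
    intro c j h1 h2
    have h := hc c
    rw [Gmul, Gmul] at h
    have := Gmat_inj_y n _ _ _ _ h j h1 h2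
    simp only [ycomb, Pi.zero_apply, zero_add, add_zero] at this
    have := this
    -- `this : y j + (if ... x ...) * c = y j + (if ... c ...) * x 1`
    exact add_left_cancel this
  have hx1 : x 1 = 0 := by
    have e1 := key 1 1 le_rfl (by omega)
    have eI := key Complex.I 1 le_rfl (by omega)
    simp only [if_true, eq_self_iff_true, _root_.map_one, Complex.conj_I, mul_one] at e1 eI
    -- e1 : -(conj (x 1)) = -1 * x 1,  eI : -(conj (x 1)) * I = (I - (-I)) * x 1
    have h2 : (starRingEnd ℂ) (x 1) = x 1 := by linear_combination -e1
    rw [h2] at eI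
    have h3 : x 1 * (2 * Complex.I) = 0 := by linear_combination -eI
    rcases mul_eq_zero.mp h3 with h | h
    · exact h
    · exact absurd h (by simp [Complex.I_ne_zero])
  intro j
  induction j with
  | zero => intro h; omega
  | succ m ih =>
    intro h1 h2
    rcases Nat.eq_zero_or_pos m with hm0 | hm0
    · subst hm0; exact hx1
    · have hm : x m = 0 := ih (by omega) (by omega)
      have h' := key 1 (m+1) (by omega) h2
      rw [if_neg (by omega), if_neg (by omega)] at h'
      simp only [Nat.add_sub_cancel, hm, map_zero, _root_.map_one, sub_zero, mul_one, sub_self,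
        zero_mul] at h'
      exact h'


/-- The group `G_n` as a subgroup of `GL`. -/
noncomputable def GnGroup (n : ℕ) : Subgroup (GL (Fin (n+3)) ℂ) where
  carrier := {g : GL (Fin (n+3)) ℂ | ↑g ∈ GnSet n}
  mul_mem' := by
    rintro a b ⟨x, y, hx⟩ ⟨x', y', hx'⟩
    exact ⟨x + x', ycomb x y x' y', by rw [Units.val_mul, hx, hx', Gmul]⟩
  one_mem' := ⟨0, 0, by rw [Units.val_one, Gmat_zero]⟩
  inv_mem' := by
    rintro a ⟨x, y, hx⟩
    refine ⟨-x, yinvf x y, ?_⟩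
    have h : (a : Matrix (Fin (n+3)) (Fin (n+3)) ℂ) * Gmat n (-x) (yinvf x y) = 1 := by
      rw [hx]; exact GG_inv n x y
    exact Units.inv_eq_of_mul_eq_one_right h

/-- The parameter homomorphism. -/
noncomputable def phiG (n : ℕ) : GnGroup n →* Multiplicative (Fin n → ℂ) :=
  MonoidHom.mk'
    (fun g => Multiplicative.ofAdd
      (pmap n ((g : GL (Fin (n+3)) ℂ) : Matrix (Fin (n+3)) (Fin (n+3)) ℂ))) (by
    rintro ⟨a, ha⟩ ⟨b, hb⟩
    obtain ⟨xa, ya, hxa⟩ := ha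
    obtain ⟨xb, yb, hxb⟩ := hb
    show Multiplicative.ofAdd (pmap n ((a * b : GL (Fin (n+3)) ℂ) : Matrix _ _ ℂ))
      = Multiplicative.ofAdd (pmap n ((a : GL (Fin (n+3)) ℂ) : Matrix _ _ ℂ))
        * Multiplicative.ofAdd (pmap n ((b : GL (Fin (n+3)) ℂ) : Matrix _ _ ℂ))
    rw [Units.val_mul, hxa, hxb, Gmul, ← ofAdd_add]
    congr 1
    funext k
    rw [Pi.add_apply, p_Gmat, p_Gmat, p_Gmat]
    rfl)

/-- `y`-parameters from a tuple. -/
noncomputable def yofz (n : ℕ) (z : Multiplicative (Fin n → ℂ)) : ℕ → ℂ :=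
  fun m => if h : 1 ≤ m ∧ m ≤ n then Multiplicative.toAdd z ⟨m-1, by omega⟩ else 0

/-- The injection of the centre. -/
noncomputable def iotaG (n : ℕ) : Multiplicative (Fin n → ℂ) →* GnGroup n :=
  MonoidHom.mk' (fun z => ⟨Gunit n 0 (yofz n z), ⟨0, yofz n z, rfl⟩⟩) (by
    intro z w
    apply Subtype.ext
    apply Units.ext
    show Gmat n 0 (yofz n (z * w)) = Gmat n 0 (yofz n z) * Gmat n 0 (yofz n w)
    have h0 : (0 : ℕ → ℂ) + 0 = 0 := by funext m; simp
    have hy : ycomb 0 (yofz n z) 0 (yofz n w) = yofz n (z * w) := by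
      funext m
      simp only [yofz, ycomb, toAdd_mul, Pi.add_apply, Pi.zero_apply, map_zero, neg_zero,
        sub_zero, mul_zero, add_zero, zero_sub, zero_mul]
      split_ifs with h
      · rfl
      · rw [add_zero]
    rw [Gmul, h0, hy])
/-- the parameter map `g ↦ (x 1, …, x n)` is a surjective homomorphism
`G_n → (ℂⁿ, +)` whose kernel is the centre of `G_n`; together with an injection
`(ℂⁿ, +) ↪ G_n` with image the kernel this gives the short exact sequence
`0 → ℂⁿ → G_n → ℂⁿ → 0`. -/
theorem Gn_param_hom_ses (n : ℕ) (hn : 2 ≤ n) :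
    ∃ (G : Subgroup (GL (Fin (n+3)) ℂ)) (φ : G →* Multiplicative (Fin n → ℂ))
      (ι : Multiplicative (Fin n → ℂ) →* G),
      (G : Set (GL (Fin (n+3)) ℂ)) = {g : GL (Fin (n+3)) ℂ | ↑g ∈ GnSet n} ∧
      (∀ (g : G) (x y : ℕ → ℂ),
        (↑(↑g : GL (Fin (n+3)) ℂ) : Matrix (Fin (n+3)) (Fin (n+3)) ℂ) = Gmat n x y →
        φ g = Multiplicative.ofAdd (fun k : Fin n => x ((k : ℕ) + 1))) ∧
      Function.Surjective φ ∧
      MonoidHom.ker φ = Subgroup.center G ∧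
      Function.Injective ι ∧
      MonoidHom.range ι = MonoidHom.ker φ := by
  -- a helper: vanishing of the x-parameters of elements of the kernel
  have hker_x : ∀ g : GnGroup n, phiG n g = 1 → ∀ x y : ℕ → ℂ,
      ((g : GL (Fin (n+3)) ℂ) : Matrix (Fin (n+3)) (Fin (n+3)) ℂ) = Gmat n x y →
      ∀ j, 1 ≤ j → j ≤ n → x j = 0 := by
    intro g hg x y hxy j hj1 hj2
    have hp : pmap n ((g : GL (Fin (n+3)) ℂ) : Matrix (Fin (n+3)) (Fin (n+3)) ℂ) = 0 := by
      have := hg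
      simpa [phiG, MonoidHom.mk'] using hg
    rw [hxy] at hp
    have := congrFun hp ⟨j - 1, by omega⟩
    rw [p_Gmat] at this
    simpa [show j - 1 + 1 = j from by omega] using this
  refine ⟨GnGroup n, phiG n, iotaG n, rfl, ?_, ?_, ?_, ?_, ?_⟩
  · -- value of φ on parameters
    intro g x y hgm
    show Multiplicative.ofAdd
      (pmap n ((g : GL (Fin (n+3)) ℂ) : Matrix (Fin (n+3)) (Fin (n+3)) ℂ)) = _
    rw [hgm]
    congr 1
    funext k
    exact p_Gmat n x y k
  · -- surjectivity
    intro v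
    set xv : ℕ → ℂ :=
      fun m => if h : 1 ≤ m ∧ m ≤ n then Multiplicative.toAdd v ⟨m-1, by omega⟩ else 0 with hxv
    refine ⟨⟨Gunit n xv 0, ⟨xv, 0, rfl⟩⟩, ?_⟩
    show Multiplicative.ofAdd (pmap n (Gmat n xv 0)) = v
    have hp : pmap n (Gmat n xv 0) = Multiplicative.toAdd v := by
      funext k
      have hk := k.isLt
      rw [p_Gmat]
      simp only [hxv]
      rw [dif_pos ⟨by omega, by omega⟩]
      congr 1
    rw [hp, ofAdd_toAdd]
  · -- kernel is the centre
    ext g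
    simp only [MonoidHom.mem_ker, Subgroup.mem_center_iff]
    constructor
    · intro hg h
      obtain ⟨x, y, hxy⟩ := g.2
      obtain ⟨x', y', hxy'⟩ := h.2
      have hx0 : ∀ j, 1 ≤ j → j ≤ n → x j = 0 := hker_x g hg x y hxy
      apply Subtype.ext
      apply Units.ext
      show ((h : GL (Fin (n+3)) ℂ) : Matrix (Fin (n+3)) (Fin (n+3)) ℂ)
          * ((g : GL (Fin (n+3)) ℂ) : Matrix (Fin (n+3)) (Fin (n+3)) ℂ)
        = ((g : GL (Fin (n+3)) ℂ) : Matrix (Fin (n+3)) (Fin (n+3)) ℂ)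
          * ((h : GL (Fin (n+3)) ℂ) : Matrix (Fin (n+3)) (Fin (n+3)) ℂ)
      rw [hxy, hxy', Gmul, Gmul]
      apply Gmat_congr n (by omega)
      · intro j hj1 hj2
        simp [add_comm]
      · intro j hj1 hj2
        have hx1 : x 1 = 0 := hx0 1 le_rfl (by omega)
        simp only [ycomb]
        rcases eq_or_ne j 1 with hj | hj
        · subst hj
          rw [if_pos rfl, if_pos rfl, hx1]
          simp
          ring
        · rw [if_neg hj, if_neg hj, hx0 j hj1 hj2, hx0 (j-1) (by omega) (by omega), hx1]
          simp
          ring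
    · intro hg
      obtain ⟨x, y, hxy⟩ := g.2
      have hcomm : ∀ c : ℂ, Gmat n x y * Gmat n (fun _ => c) 0
          = Gmat n (fun _ => c) 0 * Gmat n x y := by
        intro c
        have hm : (⟨Gunit n (fun _ => c) 0, ⟨fun _ => c, 0, rfl⟩⟩ : GnGroup n) * g
            = g * ⟨Gunit n (fun _ => c) 0, ⟨fun _ => c, 0, rfl⟩⟩ := hg _
        have := congrArg (fun u : GnGroup n =>
          ((u : GL (Fin (n+3)) ℂ) : Matrix (Fin (n+3)) (Fin (n+3)) ℂ)) hm
        simp only [Subgroup.coe_mul, Units.val_mul, Gunit_val] at this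
        rw [hxy] at this
        exact this.symm
      have hx0 := xvanish n hn x y hcomm
      show Multiplicative.ofAdd
        (pmap n ((g : GL (Fin (n+3)) ℂ) : Matrix (Fin (n+3)) (Fin (n+3)) ℂ)) = 1
      have hp : pmap n ((g : GL (Fin (n+3)) ℂ) : Matrix (Fin (n+3)) (Fin (n+3)) ℂ) = 0 := by
        funext k
        have hk := k.isLt
        rw [hxy, p_Gmat]
        exact hx0 ((k:ℕ)+1) (by omega) (by omega)
      rw [hp]
      rfl
  · -- injectivity of ι
    intro z w h
    have hq := congrArg (fun u : GnGroup n =>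
      qmap n ((u : GL (Fin (n+3)) ℂ) : Matrix (Fin (n+3)) (Fin (n+3)) ℂ)) h
    simp only [iotaG, MonoidHom.mk'] at hq
    have hq' : qmap n (Gmat n 0 (yofz n z)) = qmap n (Gmat n 0 (yofz n w)) := hq
    have : Multiplicative.toAdd z = Multiplicative.toAdd w := by
      funext k
      have hk := k.isLt
      have := congrFun hq' k
      rw [q_Gmat, q_Gmat] at this
      simp only [yofz] at this
      rw [dif_pos ⟨by omega, by omega⟩, dif_pos ⟨by omega, by omega⟩] at this
      have hfin : (⟨(k:ℕ)+1-1, by omega⟩ : Fin n) = k := by apply Fin.ext; simp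
      rwa [hfin] at this
    exact (Multiplicative.toAdd.injective this : z = w)
  · -- range ι = ker φ
    ext g
    simp only [MonoidHom.mem_range, MonoidHom.mem_ker]
    constructor
    · rintro ⟨z, rfl⟩
      show Multiplicative.ofAdd (pmap n (Gmat n 0 (yofz n z))) = 1
      have hp : pmap n (Gmat n 0 (yofz n z)) = 0 := by
        funext k
        rw [p_Gmat]
        rfl
      rw [hp]; rfl
    · intro hg
      obtain ⟨x, y, hxy⟩ := g.2
      have hx0 : ∀ j, 1 ≤ j → j ≤ n → x j = 0 := hker_x g hg x y hxy
      refine ⟨Multiplicative.ofAdd (fun k : Fin n => y ((k:ℕ)+1)), ?_⟩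
      apply Subtype.ext
      apply Units.ext
      show Gmat n 0 (yofz n (Multiplicative.ofAdd (fun k : Fin n => y ((k:ℕ)+1))))
        = ((g : GL (Fin (n+3)) ℂ) : Matrix (Fin (n+3)) (Fin (n+3)) ℂ)
      rw [hxy]
      apply Gmat_congr n (by omega)
      · intro j hj1 hj2
        exact (hx0 j hj1 hj2).symm
      · intro j hj1 hj2
        simp only [yofz, toAdd_ofAdd]
        rw [dif_pos ⟨hj1, hj2⟩]
        congr 1
        omega
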